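/- Let $K_{\alpha,\beta}$ be a symmetric kernel on $\mathbb{N}^2$ satisfying $c_1 w(\alpha,\beta) \le K_{\alpha,\beta} \le c_2 w(\alpha,\beta)$ where $w(x,y) = x^{\gamma+\lambda} y^{-\lambda} + y^{\gamma+\lambda} x^{-\lambda}$. Define $\widetilde{K}(x,y) = \sum_{\alpha,\beta \ge 1} K_{\alpha,\beta}\, \zeta_\varepsilon(x-\alpha)\zeta_\varepsilon(y-\beta) + c_1(\zeta_\varepsilon(x) + \zeta_\varepsilon(y)) w(x,y)$, where $0 < \varepsilon < 1/2$ and $\zeta_\varepsilon$ is the continuous piecewise affine cutoff equal to 1 on $[-1/2+\varepsilon, 1/2-\varepsilon]$ and 0 outside $(-1/2-\varepsilon, 1/2+\varepsilon)$. Then $\widetilde{K}$ is continuous, symmetric, nonnegative, agrees with $K$ at integer pairs, and there exist constants $0 < c_1' \le c_2'$ such that $c_1' w(x,y) \le \widetilde{K}(x,y) \le c_2' w(x,y)$ for all $x,y > 0$. -/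

import Mathlib

open MeasureTheory Set

/-- The continuous piecewise affine cutoff: equal to `1` on `[-1/2+ε, 1/2-ε]`,
`0` outside `(-1/2-ε, 1/2+ε)`, and affine in between. -/
noncomputable def zetaCutoff (ε x : ℝ) : ℝ :=
  max 0 (min 1 ((1/2 + ε - |x|) / (2 * ε)))

lemma zeta_nonneg (ε x : ℝ) : 0 ≤ zetaCutoff ε x := le_max_left _ _

lemma zeta_le_one (ε x : ℝ) : zetaCutoff ε x ≤ 1 :=
  max_le (by norm_num) (min_le_left _ _)

lemma zeta_eq_zero {ε : ℝ} (hε0 : 0 < ε) {x : ℝ} (h : 1/2 + ε ≤ |x|) :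
    zetaCutoff ε x = 0 := by
  unfold zetaCutoff
  rw [max_eq_left]
  exact (min_le_right _ _).trans (div_nonpos_of_nonpos_of_nonneg (by linarith) (by linarith))

lemma zeta_eq_one {ε : ℝ} (hε0 : 0 < ε) (hε : ε < 1/2) :
    zetaCutoff ε 0 = 1 := by
  unfold zetaCutoff
  rw [abs_zero, sub_zero, min_eq_left (by rw [le_div_iff₀ (by linarith)]; linarith),
    max_eq_right zero_le_one]

lemma half_le_zeta {ε : ℝ} (hε0 : 0 < ε) {x : ℝ} (h : |x| ≤ 1/2) :
    1/2 ≤ zetaCutoff ε x := by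
  have hv : (1:ℝ)/2 ≤ (1/2 + ε - |x|) / (2 * ε) := by
    rw [le_div_iff₀ (by linarith)]; linarith
  exact le_trans (le_min (by norm_num) hv) (le_max_right _ _)

lemma zeta_pair {ε : ℝ} (hε0 : 0 < ε) (t : ℝ) :
    zetaCutoff ε t + zetaCutoff ε (t + 1) ≤ 1 := by
  have h2ε : (0:ℝ) < 2 * ε := by linarith
  rcases le_or_gt ((1/2 + ε - |t|) / (2 * ε)) 0 with h | h
  · have h0 : zetaCutoff ε t = 0 := by
      unfold zetaCutoff
      exact max_eq_left ((min_le_right _ _).trans h)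
    rw [h0, zero_add]; exact zeta_le_one ε _
  · rcases le_or_gt ((1/2 + ε - |t + 1|) / (2 * ε)) 0 with h' | h'
    · have h0 : zetaCutoff ε (t + 1) = 0 := by
        unfold zetaCutoff
        exact max_eq_left ((min_le_right _ _).trans h')
      rw [h0, add_zero]; exact zeta_le_one ε _
    · have b1 : zetaCutoff ε t ≤ (1/2 + ε - |t|) / (2 * ε) :=
        max_le h.le (min_le_right _ _)
      have b2 : zetaCutoff ε (t + 1) ≤ (1/2 + ε - |t + 1|) / (2 * ε) :=
        max_le h'.le (min_le_right _ _)
      have habs : (1:ℝ) ≤ |t| + |t + 1| := by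
        have h1 : |(t + 1) - t| = 1 := by norm_num
        calc (1:ℝ) = |(t+1) - t| := h1.symm
          _ ≤ |t + 1| + |t| := abs_sub _ _
          _ = |t| + |t + 1| := add_comm _ _
      have : (1/2 + ε - |t|) / (2 * ε) + (1/2 + ε - |t + 1|) / (2 * ε) ≤ 1 := by
        rw [← add_div, div_le_one h2ε]; linarith
      linarith

lemma zeta_continuous (ε : ℝ) : Continuous (zetaCutoff ε) := by
  unfold zetaCutoff; fun_prop

lemma zeta_ne_zero_abs {ε : ℝ} (hε0 : 0 < ε) {x : ℝ} (h : zetaCutoff ε x ≠ 0) :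
    |x| < 1/2 + ε := by
  by_contra hc
  exact h (zeta_eq_zero hε0 (not_lt.mp hc))

lemma sum_zeta_le_one {ε : ℝ} (hε0 : 0 < ε) (hε : ε < 1/2) {x : ℝ} (hx : 0 < x)
    (s : Finset ℕ) : ∑ a ∈ s, zetaCutoff ε (x - (a + 1 : ℕ)) ≤ 1 := by
  classical
  obtain ⟨n, hn⟩ : ∃ n, n = ⌊x⌋₊ := ⟨_, rfl⟩
  have hnx : (n : ℝ) ≤ x := hn ▸ Nat.floor_le hx.le
  have hxn : x < n + 1 := hn ▸ Nat.lt_floor_add_one x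
  have hsupp : ∀ a ∈ s, zetaCutoff ε (x - (a + 1 : ℕ)) ≠ 0 →
      a ∈ ({n - 1, n} : Finset ℕ) := by
    intro a _ hne
    have habs := zeta_ne_zero_abs hε0 hne
    have h1 : |x - (a + 1 : ℕ)| < 1 := by linarith
    rw [abs_lt] at h1
    push_cast at h1
    have ha1 : (a : ℝ) < x := by linarith
    have ha2 : x < a + 2 := by linarith
    have hub : a ≤ n := by
      have : (a : ℝ) < n + 1 := by linarith
      exact_mod_cast Nat.lt_add_one_iff.mp (by exact_mod_cast this)
    have hlb : n ≤ a + 1 := by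
      have : (n : ℝ) < a + 2 := by linarith
      have := (by exact_mod_cast this : n < a + 2)
      omega
    simp only [Finset.mem_insert, Finset.mem_singleton]
    omega
  calc ∑ a ∈ s, zetaCutoff ε (x - (a + 1 : ℕ))
      = ∑ a ∈ s.filter (fun a => zetaCutoff ε (x - (a + 1 : ℕ)) ≠ 0),
          zetaCutoff ε (x - (a + 1 : ℕ)) := (Finset.sum_filter_ne_zero s).symm
    _ ≤ ∑ a ∈ ({n - 1, n} : Finset ℕ), zetaCutoff ε (x - (a + 1 : ℕ)) := by
        apply Finset.sum_le_sum_of_subset_of_nonneg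
        · intro a ha
          rw [Finset.mem_filter] at ha
          exact hsupp a ha.1 ha.2
        · intro a _ _; exact zeta_nonneg _ _
    _ ≤ 1 := by
        rcases Nat.eq_zero_or_pos n with h0 | hpos
        · rw [h0] at *
          simp only [Nat.zero_sub]
          rw [Finset.insert_eq_self.mpr (by simp)]
          rw [Finset.sum_singleton]
          exact zeta_le_one _ _
        · obtain ⟨m, hm⟩ : ∃ m, n = m + 1 := ⟨n - 1, by omega⟩
          rw [hm] at *
          rw [Finset.sum_pair (by omega : m + 1 - 1 ≠ m + 1)]
          have := zeta_pair hε0 (x - (m + 2 : ℕ))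
          have hmm : m + 1 - 1 + 1 = m + 1 := by omega
          have he : x - (m + 2 : ℕ) + 1 = x - (m + 1 - 1 + 1 : ℕ) := by
            rw [hmm]; push_cast; ring
          rw [he] at this
          have he2 : (m + 2 : ℕ) = ((m + 1) + 1 : ℕ) := by ring
          rw [he2] at this
          linarith

lemma zeta_far {ε : ℝ} (hε0 : 0 < ε) (hε : ε < 1/2) {z : ℝ} {a N : ℕ}
    (hz : z ≤ N) (ha : N ≤ a) : zetaCutoff ε (z - (a + 1 : ℕ)) = 0 := by
  apply zeta_eq_zero hε0
  have h1 : (1:ℝ) ≤ (a + 1 : ℕ) - z := by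
    have : (N:ℝ) ≤ a := by exact_mod_cast ha
    push_cast; linarith
  calc 1/2 + ε ≤ 1 := by linarith
    _ ≤ (a + 1 : ℕ) - z := h1
    _ ≤ |z - (a + 1 : ℕ)| := by rw [abs_sub_comm]; exact le_abs_self _

lemma tsum_repr {ε : ℝ} (hε0 : 0 < ε) (hε : ε < 1/2) (K : ℕ → ℕ → ℝ)
    {x y : ℝ} {N : ℕ} (hx : x ≤ N) (hy : y ≤ N) :
    (∑' α : ℕ, ∑' β : ℕ, K (α + 1) (β + 1) *
        zetaCutoff ε (x - (α + 1 : ℕ)) * zetaCutoff ε (y - (β + 1 : ℕ)))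
      = ∑ α ∈ Finset.range N, ∑ β ∈ Finset.range N, K (α + 1) (β + 1) *
        zetaCutoff ε (x - (α + 1 : ℕ)) * zetaCutoff ε (y - (β + 1 : ℕ)) := by
  rw [tsum_eq_sum (s := Finset.range N)]
  · apply Finset.sum_congr rfl
    intro α _
    apply tsum_eq_sum
    intro b hb
    rw [Finset.mem_range, not_lt] at hb
    rw [zeta_far hε0 hε hy hb, mul_zero]
  · intro a ha
    rw [Finset.mem_range, not_lt] at ha
    have : ∀ β : ℕ, K (a + 1) (β + 1) *
        zetaCutoff ε (x - (a + 1 : ℕ)) * zetaCutoff ε (y - (β + 1 : ℕ)) = 0 := by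
      intro β
      rw [zeta_far hε0 hε hx ha, mul_zero, zero_mul]
    simp only [this, tsum_zero]

lemma rpow_comp {r a b : ℝ} (hr0 : 0 < r) (ha : 0 < a) (hb : 0 < b)
    (h1 : r * b ≤ a) (h2 : a ≤ b / r) (p : ℝ) : a ^ p ≤ r ^ (-|p|) * b ^ p := by
  rcases le_or_gt 0 p with hp | hp
  · have h : a ^ p ≤ (b / r) ^ p := Real.rpow_le_rpow ha.le h2 hp
    rw [Real.div_rpow hb.le hr0.le] at h
    rw [abs_of_nonneg hp, Real.rpow_neg hr0.le]
    calc a ^ p ≤ b ^ p / r ^ p := h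
      _ = (r ^ p)⁻¹ * b ^ p := by rw [div_eq_mul_inv, mul_comm]
  · have h : a ^ p ≤ (r * b) ^ p := Real.rpow_le_rpow_of_nonpos (by positivity) h1 hp.le
    rw [Real.mul_rpow hr0.le hb.le] at h
    rw [abs_of_neg hp, neg_neg]
    exact h

lemma w_comp {r x y a b : ℝ} (hr0 : 0 < r) (hx : 0 < x) (hy : 0 < y)
    (ha : 0 < a) (hb : 0 < b)
    (h1 : r * x ≤ a) (h2 : a ≤ x / r) (h3 : r * y ≤ b) (h4 : b ≤ y / r) (p q : ℝ) :
    a ^ p * b ^ q + b ^ p * a ^ q ≤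
      r ^ (-(|p| + |q|)) * (x ^ p * y ^ q + y ^ p * x ^ q) := by
  have e : r ^ (-(|p| + |q|)) = r ^ (-|p|) * r ^ (-|q|) := by
    rw [← Real.rpow_add hr0]; ring_nf
  have t1 : a ^ p * b ^ q ≤ r ^ (-(|p| + |q|)) * (x ^ p * y ^ q) := by
    rw [e]
    calc a ^ p * b ^ q ≤ (r ^ (-|p|) * x ^ p) * (r ^ (-|q|) * y ^ q) := by
          apply mul_le_mul (rpow_comp hr0 ha hx h1 h2 p) (rpow_comp hr0 hb hy h3 h4 q)
            (Real.rpow_nonneg hb.le q) (by positivity)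
      _ = r ^ (-|p|) * r ^ (-|q|) * (x ^ p * y ^ q) := by ring
  have t2 : b ^ p * a ^ q ≤ r ^ (-(|p| + |q|)) * (y ^ p * x ^ q) := by
    rw [e]
    calc b ^ p * a ^ q ≤ (r ^ (-|p|) * y ^ p) * (r ^ (-|q|) * x ^ q) := by
          apply mul_le_mul (rpow_comp hr0 hb hy h3 h4 p) (rpow_comp hr0 ha hx h1 h2 q)
            (Real.rpow_nonneg ha.le q) (by positivity)
      _ = r ^ (-|p|) * r ^ (-|q|) * (y ^ p * x ^ q) := by ring
  calc a ^ p * b ^ q + b ^ p * a ^ q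
      ≤ r ^ (-(|p| + |q|)) * (x ^ p * y ^ q) + r ^ (-(|p| + |q|)) * (y ^ p * x ^ q) :=
        add_le_add t1 t2
    _ = _ := by ring

lemma sandwich {ε : ℝ} (hε0 : 0 < ε) (hε : ε < 1/2) {x : ℝ} (hx : 0 < x)
    {a : ℕ} (ha : 1 ≤ a) (h : |x - a| ≤ 1/2 + ε) :
    (1/2 - ε) * x ≤ (a : ℝ) ∧ (a : ℝ) ≤ x / (1/2 - ε) := by
  have ha1 : (1:ℝ) ≤ a := by exact_mod_cast ha
  rw [abs_le] at h
  have hr0 : (0:ℝ) < 1/2 - ε := by linarith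
  constructor
  · rcases le_total x 1 with h1 | h1
    · nlinarith
    · nlinarith [h.2]
  · rw [le_div_iff₀ hr0]
    have hxlb : 1/2 - ε ≤ x := by linarith [h.2]
    nlinarith [h.1]

set_option maxHeartbeats 2000000 in
theorem stmt_17 (γ lam c1 c2 ε : ℝ) (hc1 : 0 < c1) (hc12 : c1 ≤ c2)
    (hε0 : 0 < ε) (hε : ε < 1/2)
    (K : ℕ → ℕ → ℝ)
    (hKsym : ∀ α β, K α β = K β α)
    (hKlb : ∀ α β : ℕ, 1 ≤ α → 1 ≤ β →
      c1 * ((α : ℝ) ^ (γ + lam) * (β : ℝ) ^ (-lam) + (β : ℝ) ^ (γ + lam) * (α : ℝ) ^ (-lam)) ≤ K α β)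
    (hKub : ∀ α β : ℕ, 1 ≤ α → 1 ≤ β →
      K α β ≤ c2 * ((α : ℝ) ^ (γ + lam) * (β : ℝ) ^ (-lam) + (β : ℝ) ^ (γ + lam) * (α : ℝ) ^ (-lam)))
    (Kt : ℝ → ℝ → ℝ)
    (hKt : ∀ x y : ℝ, Kt x y =
      (∑' α : ℕ, ∑' β : ℕ, K (α + 1) (β + 1) *
          zetaCutoff ε (x - (α + 1 : ℕ)) * zetaCutoff ε (y - (β + 1 : ℕ))) +
        c1 * (zetaCutoff ε x + zetaCutoff ε y) *
          (x ^ (γ + lam) * y ^ (-lam) + y ^ (γ + lam) * x ^ (-lam))) :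
    ContinuousOn (fun p : ℝ × ℝ => Kt p.1 p.2) (Set.Ioi 0 ×ˢ Set.Ioi 0) ∧
    (∀ x y : ℝ, 0 < x → 0 < y → Kt x y = Kt y x) ∧
    (∀ x y : ℝ, 0 < x → 0 < y → 0 ≤ Kt x y) ∧
    (∀ α β : ℕ, 1 ≤ α → 1 ≤ β → Kt (α : ℝ) (β : ℝ) = K α β) ∧
    ∃ c1' c2' : ℝ, 0 < c1' ∧ c1' ≤ c2' ∧
      ∀ x y : ℝ, 0 < x → 0 < y →
        c1' * (x ^ (γ + lam) * y ^ (-lam) + y ^ (γ + lam) * x ^ (-lam)) ≤ Kt x y ∧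
        Kt x y ≤ c2' * (x ^ (γ + lam) * y ^ (-lam) + y ^ (γ + lam) * x ^ (-lam)) := by
  classical
  have hr0 : (0:ℝ) < 1/2 - ε := by linarith
  have hr1 : (1:ℝ)/2 - ε ≤ 1 := by linarith
  -- notation
  set s0 : ℝ := |γ + lam| + |(-lam)| with hs0def
  have hs00 : 0 ≤ s0 := by positivity
  set r : ℝ := 1/2 - ε with hrdef
  have wpos : ∀ x y : ℝ, 0 < x → 0 < y →
      0 < x ^ (γ + lam) * y ^ (-lam) + y ^ (γ + lam) * x ^ (-lam) := by
    intro x y hx hy; positivity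
  have hKnn : ∀ a b : ℕ, 1 ≤ a → 1 ≤ b → 0 ≤ K a b := by
    intro a b ha hb
    refine le_trans ?_ (hKlb a b ha hb)
    have ha' : (0:ℝ) < a := by exact_mod_cast ha
    have hb' : (0:ℝ) < b := by exact_mod_cast hb
    positivity
  have termnn : ∀ (x y : ℝ) (a b : ℕ), 0 ≤ K (a + 1) (b + 1) *
      zetaCutoff ε (x - (a + 1 : ℕ)) * zetaCutoff ε (y - (b + 1 : ℕ)) := by
    intro x y a b
    exact mul_nonneg (mul_nonneg (hKnn _ _ (by omega) (by omega)) (zeta_nonneg _ _))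
      (zeta_nonneg _ _)
  have repr : ∀ (x y : ℝ) (N : ℕ), x ≤ N → y ≤ N → Kt x y =
      (∑ α ∈ Finset.range N, ∑ β ∈ Finset.range N, K (α + 1) (β + 1) *
        zetaCutoff ε (x - (α + 1 : ℕ)) * zetaCutoff ε (y - (β + 1 : ℕ))) +
      c1 * (zetaCutoff ε x + zetaCutoff ε y) *
        (x ^ (γ + lam) * y ^ (-lam) + y ^ (γ + lam) * x ^ (-lam)) := by
    intro x y N hxN hyN
    rw [hKt, tsum_repr hε0 hε K hxN hyN]
  have Gnn : ∀ (x y : ℝ) (N : ℕ), 0 ≤ ∑ α ∈ Finset.range N, ∑ β ∈ Finset.range N,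
      K (α + 1) (β + 1) * zetaCutoff ε (x - (α + 1 : ℕ)) * zetaCutoff ε (y - (β + 1 : ℕ)) := by
    intro x y N
    exact Finset.sum_nonneg fun a _ => Finset.sum_nonneg fun b _ => termnn x y a b
  have hxNle : ∀ x y : ℝ, 0 ≤ x → x ≤ (⌈x⌉₊ + ⌈y⌉₊ : ℕ) := by
    intro x y hx
    calc x ≤ ⌈x⌉₊ := Nat.le_ceil x
      _ ≤ (⌈x⌉₊ + ⌈y⌉₊ : ℕ) := by exact_mod_cast Nat.le_add_right _ _
  have hyNle : ∀ x y : ℝ, 0 ≤ y → y ≤ (⌈x⌉₊ + ⌈y⌉₊ : ℕ) := by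
    intro x y hy
    calc y ≤ ⌈y⌉₊ := Nat.le_ceil y
      _ ≤ (⌈x⌉₊ + ⌈y⌉₊ : ℕ) := by exact_mod_cast Nat.le_add_left _ _
  -- constants
  set c1' : ℝ := c1/4 * r ^ s0 with hc1'def
  set c2' : ℝ := c2 * r ^ (-s0) + 2 * c1 with hc2'def
  have hrs_pos : 0 < r ^ s0 := Real.rpow_pos_of_pos hr0 _
  have hrs_le1 : r ^ s0 ≤ 1 := Real.rpow_le_one hr0.le hr1 hs00
  have hrns_pos : 0 < r ^ (-s0) := Real.rpow_pos_of_pos hr0 _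
  have hrns_ge1 : 1 ≤ r ^ (-s0) :=
    Real.one_le_rpow_of_pos_of_le_one_of_nonpos hr0 hr1 (by linarith)
  have hc1'pos : 0 < c1' := by positivity
  have hc1'le : c1' ≤ c1 / 2 := by
    rw [hc1'def]
    nlinarith
  have hc12' : c1' ≤ c2' := by
    rw [hc2'def]
    nlinarith
  -- lower bound
  have lower : ∀ x y : ℝ, 0 < x → 0 < y →
      c1' * (x ^ (γ + lam) * y ^ (-lam) + y ^ (γ + lam) * x ^ (-lam)) ≤ Kt x y := by
    intro x y hx hy
    have hw := wpos x y hx hy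
    rw [repr x y (⌈x⌉₊ + ⌈y⌉₊) (hxNle x y hx.le) (hyNle x y hy.le)]
    set N := ⌈x⌉₊ + ⌈y⌉₊ with hNdef
    set G := ∑ α ∈ Finset.range N, ∑ β ∈ Finset.range N, K (α + 1) (β + 1) *
      zetaCutoff ε (x - (α + 1 : ℕ)) * zetaCutoff ε (y - (β + 1 : ℕ)) with hGdef
    have hGnn : 0 ≤ G := Gnn x y N
    obtain ⟨nx, hnxdef⟩ : ∃ n, n = ⌊x + 1/2⌋₊ := ⟨_, rfl⟩
    obtain ⟨ny, hnydef⟩ : ∃ n, n = ⌊y + 1/2⌋₊ := ⟨_, rfl⟩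
    have hnx1 : (nx : ℝ) ≤ x + 1/2 := hnxdef ▸ Nat.floor_le (by linarith)
    have hnx2 : x + 1/2 < nx + 1 := hnxdef ▸ Nat.lt_floor_add_one _
    have hny1 : (ny : ℝ) ≤ y + 1/2 := hnydef ▸ Nat.floor_le (by linarith)
    have hny2 : y + 1/2 < ny + 1 := hnydef ▸ Nat.lt_floor_add_one _
    by_cases h0x : nx = 0
    · rw [h0x] at hnx2
      push_cast at hnx2
      have hzx : 1/2 ≤ zetaCutoff ε x :=
        half_le_zeta hε0 (abs_le.mpr ⟨by linarith, by linarith⟩)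
      have hE : c1 * (1/2) *
          (x ^ (γ + lam) * y ^ (-lam) + y ^ (γ + lam) * x ^ (-lam)) ≤
          c1 * (zetaCutoff ε x + zetaCutoff ε y) *
          (x ^ (γ + lam) * y ^ (-lam) + y ^ (γ + lam) * x ^ (-lam)) := by
        apply mul_le_mul_of_nonneg_right _ hw.le
        apply mul_le_mul_of_nonneg_left _ hc1.le
        linarith [zeta_nonneg ε y]
      have : c1' * (x ^ (γ + lam) * y ^ (-lam) + y ^ (γ + lam) * x ^ (-lam)) ≤
          c1 * (1/2) * (x ^ (γ + lam) * y ^ (-lam) + y ^ (γ + lam) * x ^ (-lam)) := by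
        apply mul_le_mul_of_nonneg_right _ hw.le
        linarith
      linarith
    · by_cases h0y : ny = 0
      · rw [h0y] at hny2
        push_cast at hny2
        have hzy : 1/2 ≤ zetaCutoff ε y :=
          half_le_zeta hε0 (abs_le.mpr ⟨by linarith, by linarith⟩)
        have hE : c1 * (1/2) *
            (x ^ (γ + lam) * y ^ (-lam) + y ^ (γ + lam) * x ^ (-lam)) ≤
            c1 * (zetaCutoff ε x + zetaCutoff ε y) *
            (x ^ (γ + lam) * y ^ (-lam) + y ^ (γ + lam) * x ^ (-lam)) := by
          apply mul_le_mul_of_nonneg_right _ hw.le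
          apply mul_le_mul_of_nonneg_left _ hc1.le
          linarith [zeta_nonneg ε x]
        have : c1' * (x ^ (γ + lam) * y ^ (-lam) + y ^ (γ + lam) * x ^ (-lam)) ≤
            c1 * (1/2) * (x ^ (γ + lam) * y ^ (-lam) + y ^ (γ + lam) * x ^ (-lam)) := by
          apply mul_le_mul_of_nonneg_right _ hw.le
          linarith
        linarith
      · -- both near integers ≥ 1
        have hnx1' : 1 ≤ nx := by omega
        have hny1' : 1 ≤ ny := by omega
        have hnxpos : (0:ℝ) < nx := by exact_mod_cast hnx1'
        have hnypos : (0:ℝ) < ny := by exact_mod_cast hny1'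
        have habsx : |x - (nx:ℝ)| ≤ 1/2 := abs_le.mpr ⟨by linarith, by linarith⟩
        have habsy : |y - (ny:ℝ)| ≤ 1/2 := abs_le.mpr ⟨by linarith, by linarith⟩
        obtain ⟨hsx1, hsx2⟩ := sandwich hε0 hε hx hnx1' (habsx.trans (by linarith))
        obtain ⟨hsy1, hsy2⟩ := sandwich hε0 hε hy hny1' (habsy.trans (by linarith))
        -- membership
        have hmemx : nx - 1 ∈ Finset.range N := by
          rw [Finset.mem_range]
          have h1 : (nx : ℝ) < ⌈x⌉₊ + 1 := by
            have := Nat.le_ceil x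
            linarith
          have h2 : nx ≤ ⌈x⌉₊ := by exact_mod_cast Nat.lt_add_one_iff.mp (by exact_mod_cast h1)
          have h3 : 1 ≤ ⌈y⌉₊ := Nat.one_le_ceil_iff.mpr hy
          omega
        have hmemy : ny - 1 ∈ Finset.range N := by
          rw [Finset.mem_range]
          have h1 : (ny : ℝ) < ⌈y⌉₊ + 1 := by
            have := Nat.le_ceil y
            linarith
          have h2 : ny ≤ ⌈y⌉₊ := by exact_mod_cast Nat.lt_add_one_iff.mp (by exact_mod_cast h1)
          have h3 : 1 ≤ ⌈x⌉₊ := Nat.one_le_ceil_iff.mpr hx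
          omega
        -- single term below double sum
        have henx : nx - 1 + 1 = nx := by omega
        have heny : ny - 1 + 1 = ny := by omega
        have hsingle : K nx ny * zetaCutoff ε (x - (nx:ℝ)) * zetaCutoff ε (y - (ny:ℝ)) ≤ G := by
          rw [hGdef]
          calc K nx ny * zetaCutoff ε (x - (nx:ℝ)) * zetaCutoff ε (y - (ny:ℝ))
              = K (nx - 1 + 1) (ny - 1 + 1) * zetaCutoff ε (x - (nx - 1 + 1 : ℕ)) *
                zetaCutoff ε (y - (ny - 1 + 1 : ℕ)) := by rw [henx, heny]
            _ ≤ ∑ β ∈ Finset.range N, K (nx - 1 + 1) (β + 1) *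
                zetaCutoff ε (x - (nx - 1 + 1 : ℕ)) * zetaCutoff ε (y - (β + 1 : ℕ)) :=
                Finset.single_le_sum (fun b _ => termnn x y _ b) hmemy
            _ ≤ ∑ α ∈ Finset.range N, ∑ β ∈ Finset.range N, K (α + 1) (β + 1) *
                zetaCutoff ε (x - (α + 1 : ℕ)) * zetaCutoff ε (y - (β + 1 : ℕ)) :=
                Finset.single_le_sum
                  (fun a _ => Finset.sum_nonneg fun b _ => termnn x y a b) hmemx
        have hzx : 1/2 ≤ zetaCutoff ε (x - (nx:ℝ)) := half_le_zeta hε0 habsx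
        have hzy : 1/2 ≤ zetaCutoff ε (y - (ny:ℝ)) := half_le_zeta hε0 habsy
        have hKl := hKlb nx ny hnx1' hny1'
        have hwnn : 0 ≤ (nx:ℝ) ^ (γ + lam) * (ny:ℝ) ^ (-lam) +
            (ny:ℝ) ^ (γ + lam) * (nx:ℝ) ^ (-lam) := (wpos _ _ hnxpos hnypos).le
        have hwcmp : x ^ (γ + lam) * y ^ (-lam) + y ^ (γ + lam) * x ^ (-lam) ≤
            r ^ (-s0) * ((nx:ℝ) ^ (γ + lam) * (ny:ℝ) ^ (-lam) +
              (ny:ℝ) ^ (γ + lam) * (nx:ℝ) ^ (-lam)) := by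
          rw [hs0def]
          apply w_comp hr0 hnxpos hnypos hx hy
          · rw [mul_comm, ← le_div_iff₀ hr0]; exact hsx2
          · rw [le_div_iff₀ hr0, mul_comm]; exact hsx1
          · rw [mul_comm, ← le_div_iff₀ hr0]; exact hsy2
          · rw [le_div_iff₀ hr0, mul_comm]; exact hsy1
        have hrcancel : r ^ s0 * r ^ (-s0) = 1 := by
          rw [← Real.rpow_add hr0, add_neg_cancel, Real.rpow_zero]
        have hchain : c1' * (x ^ (γ + lam) * y ^ (-lam) + y ^ (γ + lam) * x ^ (-lam)) ≤
            K nx ny * zetaCutoff ε (x - (nx:ℝ)) * zetaCutoff ε (y - (ny:ℝ)) := by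
          have step1 : c1' * (x ^ (γ + lam) * y ^ (-lam) + y ^ (γ + lam) * x ^ (-lam)) ≤
              c1/4 * ((nx:ℝ) ^ (γ + lam) * (ny:ℝ) ^ (-lam) +
                (ny:ℝ) ^ (γ + lam) * (nx:ℝ) ^ (-lam)) := by
            rw [hc1'def]
            calc c1/4 * r ^ s0 * (x ^ (γ + lam) * y ^ (-lam) + y ^ (γ + lam) * x ^ (-lam))
                ≤ c1/4 * r ^ s0 * (r ^ (-s0) * ((nx:ℝ) ^ (γ + lam) * (ny:ℝ) ^ (-lam) +
                    (ny:ℝ) ^ (γ + lam) * (nx:ℝ) ^ (-lam))) := by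
                  apply mul_le_mul_of_nonneg_left hwcmp (by positivity)
              _ = c1/4 * (r ^ s0 * r ^ (-s0)) * ((nx:ℝ) ^ (γ + lam) * (ny:ℝ) ^ (-lam) +
                    (ny:ℝ) ^ (γ + lam) * (nx:ℝ) ^ (-lam)) := by ring
              _ = c1/4 * ((nx:ℝ) ^ (γ + lam) * (ny:ℝ) ^ (-lam) +
                    (ny:ℝ) ^ (γ + lam) * (nx:ℝ) ^ (-lam)) := by rw [hrcancel, mul_one]
          have step2 : c1/4 * ((nx:ℝ) ^ (γ + lam) * (ny:ℝ) ^ (-lam) +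
              (ny:ℝ) ^ (γ + lam) * (nx:ℝ) ^ (-lam)) ≤
              K nx ny * zetaCutoff ε (x - (nx:ℝ)) * zetaCutoff ε (y - (ny:ℝ)) := by
            have hKnn' : 0 ≤ K nx ny := hKnn nx ny hnx1' hny1'
            have e1 : c1/4 * ((nx:ℝ) ^ (γ + lam) * (ny:ℝ) ^ (-lam) +
                (ny:ℝ) ^ (γ + lam) * (nx:ℝ) ^ (-lam)) =
                (c1 * ((nx:ℝ) ^ (γ + lam) * (ny:ℝ) ^ (-lam) +
                (ny:ℝ) ^ (γ + lam) * (nx:ℝ) ^ (-lam))) * (1/2) * (1/2) := by ring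
            rw [e1]
            apply mul_le_mul _ hzy (by norm_num)
              (mul_nonneg hKnn' (zeta_nonneg _ _))
            apply mul_le_mul hKl hzx (by norm_num) hKnn'
          exact step1.trans step2
        calc c1' * (x ^ (γ + lam) * y ^ (-lam) + y ^ (γ + lam) * x ^ (-lam))
            ≤ K nx ny * zetaCutoff ε (x - (nx:ℝ)) * zetaCutoff ε (y - (ny:ℝ)) := hchain
          _ ≤ G := hsingle
          _ ≤ G + c1 * (zetaCutoff ε x + zetaCutoff ε y) *
              (x ^ (γ + lam) * y ^ (-lam) + y ^ (γ + lam) * x ^ (-lam)) := by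
              have : 0 ≤ c1 * (zetaCutoff ε x + zetaCutoff ε y) *
                  (x ^ (γ + lam) * y ^ (-lam) + y ^ (γ + lam) * x ^ (-lam)) :=
                mul_nonneg (mul_nonneg hc1.le
                  (add_nonneg (zeta_nonneg _ _) (zeta_nonneg _ _))) hw.le
              linarith
  -- upper bound
  have upper : ∀ x y : ℝ, 0 < x → 0 < y →
      Kt x y ≤ c2' * (x ^ (γ + lam) * y ^ (-lam) + y ^ (γ + lam) * x ^ (-lam)) := by
    intro x y hx hy
    have hw := wpos x y hx hy
    rw [repr x y (⌈x⌉₊ + ⌈y⌉₊) (hxNle x y hx.le) (hyNle x y hy.le)]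
    set N := ⌈x⌉₊ + ⌈y⌉₊ with hNdef
    set W := x ^ (γ + lam) * y ^ (-lam) + y ^ (γ + lam) * x ^ (-lam) with hWdef
    set cW := c2 * (r ^ (-s0) * W) with hcWdef
    have hcWnn : 0 ≤ cW := by
      rw [hcWdef]
      have := hc1.trans_le hc12
      positivity
    have hterm : ∀ a b : ℕ, K (a + 1) (b + 1) *
        zetaCutoff ε (x - (a + 1 : ℕ)) * zetaCutoff ε (y - (b + 1 : ℕ)) ≤
        cW * zetaCutoff ε (x - (a + 1 : ℕ)) * zetaCutoff ε (y - (b + 1 : ℕ)) := by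
      intro a b
      by_cases hza : zetaCutoff ε (x - (a + 1 : ℕ)) = 0
      · rw [hza]; simp
      by_cases hzb : zetaCutoff ε (y - (b + 1 : ℕ)) = 0
      · rw [hzb]; simp
      have hxa := (zeta_ne_zero_abs hε0 hza).le
      have hyb := (zeta_ne_zero_abs hε0 hzb).le
      obtain ⟨hsx1, hsx2⟩ := sandwich hε0 hε hx (by omega : 1 ≤ a + 1) hxa
      obtain ⟨hsy1, hsy2⟩ := sandwich hε0 hε hy (by omega : 1 ≤ b + 1) hyb
      have hapos : (0:ℝ) < (a + 1 : ℕ) := by positivity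
      have hbpos : (0:ℝ) < (b + 1 : ℕ) := by positivity
      have hwcmp : ((a+1:ℕ):ℝ) ^ (γ + lam) * ((b+1:ℕ):ℝ) ^ (-lam) +
          ((b+1:ℕ):ℝ) ^ (γ + lam) * ((a+1:ℕ):ℝ) ^ (-lam) ≤ r ^ (-s0) * W := by
        rw [hs0def, hWdef]
        exact w_comp hr0 hx hy hapos hbpos hsx1 hsx2 hsy1 hsy2 (γ + lam) (-lam)
      have hKb : K (a+1) (b+1) ≤ cW := by
        rw [hcWdef]
        calc K (a+1) (b+1) ≤ c2 * (((a+1:ℕ):ℝ) ^ (γ + lam) * ((b+1:ℕ):ℝ) ^ (-lam) +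
              ((b+1:ℕ):ℝ) ^ (γ + lam) * ((a+1:ℕ):ℝ) ^ (-lam)) :=
              hKub (a+1) (b+1) (by omega) (by omega)
          _ ≤ c2 * (r ^ (-s0) * W) := by
              apply mul_le_mul_of_nonneg_left hwcmp (by linarith)
      apply mul_le_mul_of_nonneg_right _ (zeta_nonneg _ _)
      exact mul_le_mul_of_nonneg_right hKb (zeta_nonneg _ _)
    have hGub : (∑ α ∈ Finset.range N, ∑ β ∈ Finset.range N, K (α + 1) (β + 1) *
        zetaCutoff ε (x - (α + 1 : ℕ)) * zetaCutoff ε (y - (β + 1 : ℕ))) ≤ cW := by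
      have hsx := sum_zeta_le_one hε0 hε hx (Finset.range N)
      have hsy := sum_zeta_le_one hε0 hε hy (Finset.range N)
      have hsxnn : 0 ≤ ∑ a ∈ Finset.range N, zetaCutoff ε (x - (a + 1 : ℕ)) :=
        Finset.sum_nonneg fun a _ => zeta_nonneg _ _
      have hsynn : 0 ≤ ∑ b ∈ Finset.range N, zetaCutoff ε (y - (b + 1 : ℕ)) :=
        Finset.sum_nonneg fun b _ => zeta_nonneg _ _
      calc (∑ α ∈ Finset.range N, ∑ β ∈ Finset.range N, K (α + 1) (β + 1) *
            zetaCutoff ε (x - (α + 1 : ℕ)) * zetaCutoff ε (y - (β + 1 : ℕ)))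
          ≤ ∑ α ∈ Finset.range N, ∑ β ∈ Finset.range N, cW *
            zetaCutoff ε (x - (α + 1 : ℕ)) * zetaCutoff ε (y - (β + 1 : ℕ)) :=
            Finset.sum_le_sum fun a _ => Finset.sum_le_sum fun b _ => hterm a b
        _ = cW * ((∑ a ∈ Finset.range N, zetaCutoff ε (x - (a + 1 : ℕ))) *
            (∑ b ∈ Finset.range N, zetaCutoff ε (y - (b + 1 : ℕ)))) := by
            rw [Finset.sum_mul_sum, Finset.mul_sum]
            apply Finset.sum_congr rfl
            intro a _
            rw [Finset.mul_sum]
            apply Finset.sum_congr rfl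
            intro b _
            ring
        _ ≤ cW * 1 := by
            apply mul_le_mul_of_nonneg_left _ hcWnn
            calc (∑ a ∈ Finset.range N, zetaCutoff ε (x - (a + 1 : ℕ))) *
                (∑ b ∈ Finset.range N, zetaCutoff ε (y - (b + 1 : ℕ)))
                ≤ 1 * 1 := mul_le_mul hsx hsy hsynn zero_le_one
              _ = 1 := by norm_num
        _ = cW := mul_one _
    have hEub : c1 * (zetaCutoff ε x + zetaCutoff ε y) * W ≤ 2 * c1 * W := by
      apply mul_le_mul_of_nonneg_right _ hw.le
      have := zeta_le_one ε x
      have := zeta_le_one ε y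
      nlinarith
    have : c2' * W = cW + 2 * c1 * W := by rw [hc2'def, hcWdef]; ring
    linarith
  -- symmetry
  have hsymm : ∀ x y : ℝ, 0 < x → 0 < y → Kt x y = Kt y x := by
    intro x y hx hy
    rw [repr x y (⌈x⌉₊ + ⌈y⌉₊) (hxNle x y hx.le) (hyNle x y hy.le),
      repr y x (⌈x⌉₊ + ⌈y⌉₊) (hyNle x y hy.le) (hxNle x y hx.le)]
    congr 1
    · rw [Finset.sum_comm]
      apply Finset.sum_congr rfl
      intro a _
      apply Finset.sum_congr rfl
      intro b _
      rw [hKsym (b + 1) (a + 1)]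
      ring
    · ring
  -- value at integer points
  have hintv : ∀ α β : ℕ, 1 ≤ α → 1 ≤ β → Kt (α : ℝ) (β : ℝ) = K α β := by
    intro α β hα hβ
    have hxN : (α : ℝ) ≤ (α + β : ℕ) := by exact_mod_cast Nat.le_add_right α β
    have hyN : (β : ℝ) ≤ (α + β : ℕ) := by exact_mod_cast Nat.le_add_left β α
    rw [repr _ _ (α + β) hxN hyN]
    have hzα : zetaCutoff ε (α : ℝ) = 0 := by
      apply zeta_eq_zero hε0
      have h1 : (1:ℝ) ≤ α := by exact_mod_cast hα
      rw [abs_of_pos (by linarith)]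
      linarith
    have hzβ : zetaCutoff ε (β : ℝ) = 0 := by
      apply zeta_eq_zero hε0
      have h1 : (1:ℝ) ≤ β := by exact_mod_cast hβ
      rw [abs_of_pos (by linarith)]
      linarith
    rw [hzα, hzβ]
    have hkey : ∀ (m : ℕ), 1 ≤ m → ∀ a : ℕ, a + 1 ≠ m →
        zetaCutoff ε ((m : ℝ) - (a + 1 : ℕ)) = 0 := by
      intro m hm a hne
      apply zeta_eq_zero hε0
      have : (1:ℝ) ≤ |(m : ℝ) - (a + 1 : ℕ)| := by
        rcases lt_or_gt_of_ne hne with hlt | hgt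
        · have h2 : a + 1 + 1 ≤ m := by omega
          have h2' : ((a:ℝ) + 1) + 1 ≤ m := by exact_mod_cast h2
          rw [abs_of_nonneg (by push_cast; linarith)]
          push_cast
          linarith
        · have h2 : m + 1 ≤ a + 1 := by omega
          have h2' : (m:ℝ) + 1 ≤ (a:ℝ) + 1 := by exact_mod_cast h2
          rw [abs_of_nonpos (by push_cast; linarith)]
          push_cast
          linarith
      linarith
    rw [Finset.sum_eq_single_of_mem (α - 1)
      (by rw [Finset.mem_range]; omega)]
    · rw [Finset.sum_eq_single_of_mem (β - 1)
        (by rw [Finset.mem_range]; omega)]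
      · have e1 : α - 1 + 1 = α := by omega
        have e2 : β - 1 + 1 = β := by omega
        rw [e1, e2, sub_self, sub_self, zeta_eq_one hε0 hε]
        ring
      · intro b _ hb
        rw [hkey β hβ b (by omega), mul_zero]
    · intro a _ ha
      apply Finset.sum_eq_zero
      intro b _
      rw [hkey α hα a (by omega), mul_zero, zero_mul]
  -- nonnegativity
  have hnn : ∀ x y : ℝ, 0 < x → 0 < y → 0 ≤ Kt x y := by
    intro x y hx hy
    refine le_trans ?_ (lower x y hx hy)
    exact mul_nonneg hc1'pos.le (wpos x y hx hy).le
  -- continuity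
  have hcont : ContinuousOn (fun p : ℝ × ℝ => Kt p.1 p.2) (Set.Ioi 0 ×ˢ Set.Ioi 0) := by
    intro pt hpt
    rw [Set.mem_prod, Set.mem_Ioi, Set.mem_Ioi] at hpt
    obtain ⟨hx, hy⟩ := hpt
    apply ContinuousAt.continuousWithinAt
    set N := ⌈pt.1⌉₊ + ⌈pt.2⌉₊ with hNdef
    have hx' : pt.1 < N := by
      have h1 : pt.1 ≤ ⌈pt.1⌉₊ := Nat.le_ceil _
      have h2 : (⌈pt.1⌉₊ : ℝ) < N := by
        rw [hNdef]
        have : 1 ≤ ⌈pt.2⌉₊ := Nat.one_le_ceil_iff.mpr hy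
        push_cast
        have : (1:ℝ) ≤ ⌈pt.2⌉₊ := by exact_mod_cast this
        linarith
      linarith
    have hy' : pt.2 < N := by
      have h1 : pt.2 ≤ ⌈pt.2⌉₊ := Nat.le_ceil _
      have h2 : (⌈pt.2⌉₊ : ℝ) < N := by
        rw [hNdef]
        have : 1 ≤ ⌈pt.1⌉₊ := Nat.one_le_ceil_iff.mpr hx
        push_cast
        have : (1:ℝ) ≤ ⌈pt.1⌉₊ := by exact_mod_cast this
        linarith
      linarith
    have hmem : {q : ℝ × ℝ | q.1 < N ∧ q.2 < N} ∈ nhds pt := by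
      apply IsOpen.mem_nhds
      · exact (isOpen_lt continuous_fst continuous_const).inter
          (isOpen_lt continuous_snd continuous_const)
      · exact ⟨hx', hy'⟩
    apply ContinuousAt.congr (f := fun q : ℝ × ℝ =>
      (∑ α ∈ Finset.range N, ∑ β ∈ Finset.range N, K (α + 1) (β + 1) *
        zetaCutoff ε (q.1 - (α + 1 : ℕ)) * zetaCutoff ε (q.2 - (β + 1 : ℕ))) +
      c1 * (zetaCutoff ε q.1 + zetaCutoff ε q.2) *
        (q.1 ^ (γ + lam) * q.2 ^ (-lam) + q.2 ^ (γ + lam) * q.1 ^ (-lam)))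
    · apply ContinuousAt.add
      · apply Continuous.continuousAt
        apply continuous_finset_sum
        intro a _
        apply continuous_finset_sum
        intro b _
        exact ((continuous_const.mul ((zeta_continuous ε).comp
          (continuous_fst.sub continuous_const))).mul ((zeta_continuous ε).comp
          (continuous_snd.sub continuous_const)))
      · apply ContinuousAt.mul
        · exact (continuous_const.mul (((zeta_continuous ε).comp continuous_fst).add
            ((zeta_continuous ε).comp continuous_snd))).continuousAt
        · apply ContinuousAt.add
          · exact ContinuousAt.mul
              ((Real.continuousAt_rpow_const pt.1 (γ + lam) (Or.inl hx.ne')).comp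
                continuous_fst.continuousAt)
              ((Real.continuousAt_rpow_const pt.2 (-lam) (Or.inl hy.ne')).comp
                continuous_snd.continuousAt)
          · exact ContinuousAt.mul
              ((Real.continuousAt_rpow_const pt.2 (γ + lam) (Or.inl hy.ne')).comp
                continuous_snd.continuousAt)
              ((Real.continuousAt_rpow_const pt.1 (-lam) (Or.inl hx.ne')).comp
                continuous_fst.continuousAt)
    · apply Filter.eventuallyEq_of_mem hmem
      intro q hq
      obtain ⟨h1, h2⟩ := hq
      exact (repr q.1 q.2 N h1.le h2.le).symm
  exact ⟨hcont, hsymm, hnn, hintv,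
    ⟨c1', c2', hc1'pos, hc12', fun x y hx hy => ⟨lower x y hx hy, upper x y hx hy⟩⟩⟩
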